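/- arXiv:2007.00085 — 2 statements merged into one kernel-verified Lean document; each statement's English description precedes it below -/
import Mathlib

section
/- If a belief support b is winning for a reach-avoid specification, then every nonempty subset b' ⊆ b is also winning. -/
open scoped ENNReal Classical

/-- A POMDP: transition function `P` and observation function `obs`. -/
structure POMDP (S Act Ω : Type) where
  P : S → Act → PMF S
  obs : S → Ω

namespace POMDP

variable {S Act Ω : Type}

/-- A history-dependent observation-based policy: maps the observation-action
history and the current observation to a distribution over actions. -/
def Policy (Act Ω : Type) := List (Ω × Act) → Ω → PMF Act

/-- Probability to reach `T` within `n` steps, starting in state `s` with history `h`. -/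
noncomputable def reachN (M : POMDP S Act Ω) (σ : Policy Act Ω) (T : Set S) :
    ℕ → List (Ω × Act) → S → ℝ≥0∞
  | 0, _, s => if s ∈ T then 1 else 0
  | n + 1, h, s =>
    if s ∈ T then 1
    else ∑' α : Act, σ h (M.obs s) α *
      ∑' s' : S, M.P s α s' * M.reachN σ T n (h ++ [(M.obs s, α)]) s'

/-- Probability to eventually reach `T` from initial belief `b` under policy `σ`. -/
noncomputable def prReach (M : POMDP S Act Ω) (σ : Policy Act Ω) (T : Set S)
    (b : PMF S) : ℝ≥0∞ :=
  ⨆ n, ∑' s : S, b s * M.reachN σ T n [] s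

/-- A policy is winning from belief `b`: AVOID reached with probability 0,
REACH reached with probability 1. -/
def WinningPolicyFrom (M : POMDP S Act Ω) (REACH AVOID : Set S)
    (σ : Policy Act Ω) (b : PMF S) : Prop :=
  M.prReach σ AVOID b = 0 ∧ M.prReach σ REACH b = 1

/-- A belief is winning if some winning policy exists from it. -/
def WinningBelief (M : POMDP S Act Ω) (REACH AVOID : Set S) (b : PMF S) : Prop :=
  ∃ σ, M.WinningPolicyFrom REACH AVOID σ b

/-- A set of states is absorbing. -/
def Absorbing (M : POMDP S Act Ω) (T : Set S) : Prop :=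
  ∀ s ∈ T, ∀ α, M.P s α = PMF.pure s

/-- A belief support: a nonempty set of states sharing a common observation. -/
def IsBeliefSupport (M : POMDP S Act Ω) (b : Set S) : Prop :=
  b.Nonempty ∧ ∀ s ∈ b, ∀ s' ∈ b, M.obs s = M.obs s'

/-- A policy is winning from a belief support `b` if it is winning from every
belief whose support is `b`. -/
def WinningFromSupport (M : POMDP S Act Ω) (REACH AVOID : Set S)
    (σ : Policy Act Ω) (b : Set S) : Prop :=
  ∀ β : PMF S, β.support = b → M.WinningPolicyFrom REACH AVOID σ β

/-- A belief support is winning if some policy is winning from it. -/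
def WinningSupport (M : POMDP S Act Ω) (REACH AVOID : Set S) (b : Set S) : Prop :=
  ∃ σ, M.WinningFromSupport REACH AVOID σ b

end POMDP

/-!
Given a belief `β` supported on `b' ⊆ b`, mix it half-and-half with the uniform belief on `b`.
The mixture has support `b`, so a policy winning from `b` wins from it. Reachability
probabilities are affine in the initial belief, and both of them lie in `[0, 1]`; hence
AVOID-probability `0` and REACH-probability `1` for the mixture force the same values for `β`.
-/

namespace PMF

variable {α : Type*}

noncomputable def halfMix (p q : PMF α) : PMF α :=
  ⟨fun a => 2⁻¹ * p a + 2⁻¹ * q a, by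
    rw [ENNReal.summable.hasSum_iff, ENNReal.tsum_add, ENNReal.tsum_mul_left,
      ENNReal.tsum_mul_left, p.tsum_coe, q.tsum_coe, mul_one, ENNReal.inv_two_add_inv_two]⟩

theorem halfMix_apply (p q : PMF α) (a : α) : halfMix p q a = 2⁻¹ * p a + 2⁻¹ * q a := rfl

theorem support_halfMix (p q : PMF α) : (halfMix p q).support = p.support ∪ q.support := by
  ext a
  simp [halfMix_apply, imp_iff_not_or]

theorem tsum_halfMix_mul (p q : PMF α) (r : α → ℝ≥0∞) :
    ∑' a, halfMix p q a * r a = 2⁻¹ * ∑' a, p a * r a + 2⁻¹ * ∑' a, q a * r a := by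
  simp only [halfMix_apply, add_mul, mul_assoc, ENNReal.tsum_add, ENNReal.tsum_mul_left]

theorem tsum_mul_le_one (p : PMF α) {r : α → ℝ≥0∞} (hr : ∀ a, r a ≤ 1) :
    ∑' a, p a * r a ≤ 1 :=
  calc ∑' a, p a * r a ≤ ∑' a, p a := ENNReal.tsum_le_tsum fun a => mul_le_of_le_one_right' (hr a)
    _ = 1 := p.tsum_coe

end PMF

namespace POMDP

variable {S Act Ω : Type} (M : POMDP S Act Ω) (σ : Policy Act Ω) (T : Set S)

theorem reachN_le_one (n : ℕ) (h : List (Ω × Act)) (s : S) : M.reachN σ T n h s ≤ 1 := by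
  induction n generalizing h s with
  | zero => unfold reachN; split <;> simp
  | succ n ih =>
    unfold reachN
    split
    · exact le_rfl
    · exact PMF.tsum_mul_le_one _ fun α => PMF.tsum_mul_le_one _ fun s' => ih _ s'

theorem reachN_le_succ (n : ℕ) (h : List (Ω × Act)) (s : S) :
    M.reachN σ T n h s ≤ M.reachN σ T (n + 1) h s := by
  induction n generalizing h s with
  | zero => unfold reachN; split <;> simp
  | succ n ih =>
    rw [reachN, reachN]
    split
    · exact le_rfl
    · gcongr with α s'
      exact ih _ s'

theorem monotone_tsum_mul_reachN (β : PMF S) :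
    Monotone fun n => ∑' s, β s * M.reachN σ T n [] s :=
  monotone_nat_of_le_succ fun n => ENNReal.tsum_le_tsum fun s =>
    mul_le_mul_right (M.reachN_le_succ σ T n [] s) _

theorem prReach_le_one (β : PMF S) : M.prReach σ T β ≤ 1 :=
  iSup_le fun n => β.tsum_mul_le_one fun s => M.reachN_le_one σ T n [] s

theorem prReach_halfMix (p q : PMF S) :
    M.prReach σ T (p.halfMix q) = 2⁻¹ * M.prReach σ T p + 2⁻¹ * M.prReach σ T q := by
  simp only [prReach, PMF.tsum_halfMix_mul, ENNReal.mul_iSup]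
  exact (ENNReal.iSup_add_iSup_of_monotone ((M.monotone_tsum_mul_reachN σ T p).const_mul' _)
    ((M.monotone_tsum_mul_reachN σ T q).const_mul' _)).symm

theorem winningPolicyFrom_of_halfMix {REACH AVOID : Set S} {p q : PMF S}
    (h : M.WinningPolicyFrom REACH AVOID σ (p.halfMix q)) :
    M.WinningPolicyFrom REACH AVOID σ p := by
  obtain ⟨havoid, hreach⟩ := h
  rw [prReach_halfMix] at havoid hreach
  refine ⟨by simpa using (add_eq_zero.mp havoid).1, le_antisymm (M.prReach_le_one σ REACH p) ?_⟩
  have hhalf : 2⁻¹ * 1 + 2⁻¹ ≤ 2⁻¹ * M.prReach σ REACH p + 2⁻¹ := by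
    rw [mul_one, ENNReal.inv_two_add_inv_two, ← hreach]
    gcongr
    exact mul_le_of_le_one_right' (M.prReach_le_one σ REACH q)
  rwa [ENNReal.add_le_add_iff_right (by simp), ENNReal.mul_le_mul_iff_right (by simp) (by simp)]
    at hhalf

end POMDP

theorem winning_support_subset_general {S Act Ω : Type} [Fintype S]
    (M : POMDP S Act Ω) (REACH AVOID : Set S)
    (b b' : Set S)
    (hsub : b' ⊆ b)
    (hwin : M.WinningSupport REACH AVOID b) :
    M.WinningSupport REACH AVOID b' := by
  obtain ⟨σ, hσ⟩ := hwin
  refine ⟨σ, fun β hβ => ?_⟩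
  have hb_ne : b.toFinset.Nonempty := by
    simpa using (hβ ▸ β.support_nonempty).mono hsub
  let u := PMF.uniformOfFinset b.toFinset hb_ne
  have hmix : (β.halfMix u).support = b := by
    rw [PMF.support_halfMix, PMF.support_uniformOfFinset, Set.coe_toFinset, hβ,
      Set.union_eq_right.mpr hsub]
  exact M.winningPolicyFrom_of_halfMix σ (hσ _ hmix)

/-- If a belief support `b` is winning, every nonempty subset
`b' ⊆ b` is also winning. -/
theorem winning_support_subset {S Act Ω : Type} [Fintype S] [Fintype Act]
    (M : POMDP S Act Ω) (REACH AVOID : Set S)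
    (hdisj : Disjoint REACH AVOID)
    (hR : M.Absorbing REACH) (hA : M.Absorbing AVOID)
    (b b' : Set S) (hb : M.IsBeliefSupport b)
    (hsub : b' ⊆ b) (hne : b'.Nonempty)
    (hwin : M.WinningSupport REACH AVOID b) :
    M.WinningSupport REACH AVOID b' :=
  winning_support_subset_general M REACH AVOID b b' hsub hwin
end

section
/- In a finite MDP, a memoryless policy whose reached set C avoids AVOID, is closed under successors, and admits a ranking function (every non-REACH state in C has a successor of strictly smaller rank) reaches REACH with probability 1 from every state in C. -/
open scoped ENNReal Classical

/-- Probability that the Markov chain induced by a memoryless policy `σ` on an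
MDP with transitions `P` reaches `T` within `n` steps from `s`. -/
noncomputable def mcReachN {S : Type} (K : S → PMF S) (T : Set S) :
    ℕ → S → ℝ≥0∞
  | 0, s => if s ∈ T then 1 else 0
  | n + 1, s => if s ∈ T then 1 else ∑' t : S, K s t * mcReachN K T n t

/-- Probability of eventually reaching `T` from `s`. -/
noncomputable def mcReach {S : Type} (K : S → PMF S) (T : Set S) (s : S) : ℝ≥0∞ :=
  ⨆ n, mcReachN K T n s

/-!
Let `f` be the reachability probability and `m` its minimum over the closed set `C`. Since `f` is
harmonic off `REACH`, every successor of a minimiser outside `REACH` is again a minimiser. Among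
the minimisers, one of least rank has no minimiser of smaller rank among its successors, so it lies
in `REACH`; hence `m = 1`.
-/

theorem ENNReal.tsum_iSup_of_monotone {α ι : Type*} [Preorder ι] [IsDirectedOrder ι]
    {f : α → ι → ℝ≥0∞} (hf : ∀ a, Monotone (f a)) :
    ∑' a, ⨆ i, f a i = ⨆ i, ∑' a, f a i := by
  simp_rw [ENNReal.tsum_eq_iSup_sum, ENNReal.finsetSum_iSup_of_monotone hf]
  exact iSup_comm

theorem PMF.apply_eq_of_le_of_tsum_mul_le {α : Type*} (p : PMF α) {f : α → ℝ≥0∞} {m : ℝ≥0∞}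
    (hm : m ≠ ∞) (hle : ∀ a ∈ p.support, m ≤ f a) (hsum : ∑' a, p a * f a ≤ m)
    {a : α} (ha : a ∈ p.support) : f a = m := by
  refine le_antisymm ?_ (hle a ha)
  by_contra! hlt
  have hmean : ∑' b, p b * m = m := by rw [ENNReal.tsum_mul_right, p.tsum_coe, one_mul]
  have hpointwise : ∀ b, p b * m ≤ p b * f b := fun b => by
    by_cases hb : b ∈ p.support
    · exact mul_le_mul_right (hle b hb) _
    · simp [(p.mem_support_iff b).not_left.1 hb]
  have hstrict : p a * m < p a * f a :=
    (ENNReal.mul_lt_mul_iff_right ha (p.apply_ne_top a)).2 hlt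
  have hgt : m < ∑' b, p b * f b :=
    hmean ▸ ENNReal.tsum_lt_tsum (hmean.symm ▸ hm) hpointwise hstrict
  exact hgt.not_ge hsum

theorem Set.Finite.inter_nonempty_of_forall_exists_lt {S β : Type*} [LinearOrder β]
    {M T : Set S} (hM : M.Finite) (hne : M.Nonempty) (r : S → β)
    (hdesc : ∀ s ∈ M, s ∉ T → ∃ s' ∈ M, r s' < r s) : (M ∩ T).Nonempty := by
  obtain ⟨t, htM, hmin⟩ := M.exists_min_image r hM hne
  by_contra hempty
  obtain ⟨t', ht'M, hlt⟩ := hdesc t htM fun htT => hempty ⟨t, htM, htT⟩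
  exact (hmin t' ht'M).not_gt hlt

section Reachability

variable {S : Type} (K : S → PMF S) (T : Set S)

theorem mcReachN_of_mem {s : S} (hs : s ∈ T) (n : ℕ) : mcReachN K T n s = 1 := by
  cases n <;> simp [mcReachN, hs]

theorem mcReachN_succ_of_notMem {s : S} (hs : s ∉ T) (n : ℕ) :
    mcReachN K T (n + 1) s = ∑' t, K s t * mcReachN K T n t := by
  simp [mcReachN, hs]

theorem mcReachN_le_one (n : ℕ) (s : S) : mcReachN K T n s ≤ 1 := by
  induction n generalizing s with
  | zero => by_cases hs : s ∈ T <;> simp [mcReachN, hs]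
  | succ n ih =>
    by_cases hs : s ∈ T
    · exact (mcReachN_of_mem K T hs _).le
    · rw [mcReachN_succ_of_notMem K T hs]
      calc ∑' t, K s t * mcReachN K T n t ≤ ∑' t, K s t :=
            ENNReal.tsum_le_tsum fun t => mul_le_of_le_one_right' (ih t)
        _ = 1 := (K s).tsum_coe

theorem mcReachN_monotone (s : S) : Monotone fun n => mcReachN K T n s := by
  refine monotone_nat_of_le_succ fun n => ?_
  induction n generalizing s with
  | zero => by_cases hs : s ∈ T <;> simp [mcReachN, hs]
  | succ n ih =>
    by_cases hs : s ∈ T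
    · simp [mcReachN_of_mem K T hs]
    · simp only [mcReachN_succ_of_notMem K T hs]
      exact ENNReal.tsum_le_tsum fun t => mul_le_mul_right (ih t) _

theorem mcReach_le_one (s : S) : mcReach K T s ≤ 1 :=
  iSup_le fun n => mcReachN_le_one K T n s

theorem mcReach_of_mem {s : S} (hs : s ∈ T) : mcReach K T s = 1 := by
  simp [mcReach, mcReachN_of_mem K T hs]

theorem mcReach_eq_tsum_of_notMem {s : S} (hs : s ∉ T) :
    mcReach K T s = ∑' t, K s t * mcReach K T t := by
  have hzero : mcReachN K T 0 s = 0 := by simp [mcReachN, hs]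
  calc mcReach K T s = ⨆ n, mcReachN K T (n + 1) s := by
        rw [mcReach, ← sup_iSup_nat_succ, hzero, zero_max]
    _ = ⨆ n, ∑' t, K s t * mcReachN K T n t := by
        simp only [mcReachN_succ_of_notMem K T hs]
    _ = ∑' t, ⨆ n, K s t * mcReachN K T n t :=
        (ENNReal.tsum_iSup_of_monotone fun t =>
          (mcReachN_monotone K T t).const_mul bot_le).symm
    _ = ∑' t, K s t * mcReach K T t := by simp only [mcReach, ENNReal.mul_iSup]

theorem isMinOn_mcReach_of_apply_ne_zero {C : Set S} {s u : S}
    (hmin : IsMinOn (mcReach K T) C s) (hs : s ∉ T) (hclosed : ∀ t, K s t ≠ 0 → t ∈ C)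
    (hu : K s u ≠ 0) : IsMinOn (mcReach K T) C u := by
  have heq : mcReach K T u = mcReach K T s :=
    (K s).apply_eq_of_le_of_tsum_mul_le (ne_top_of_le_ne_top ENNReal.one_ne_top
      (mcReach_le_one K T s)) (fun t ht => isMinOn_iff.1 hmin t (hclosed t ht))
      (mcReach_eq_tsum_of_notMem K T hs).ge hu
  exact isMinOn_iff.2 fun t ht => heq ▸ isMinOn_iff.1 hmin t ht

end Reachability

theorem ranking_implies_as_reach_general {S Act : Type} [Fintype S]
    (P : S → Act → PMF S) (REACH : Set S)
    (σ : S → Act) (C : Set S)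
    (hclosed : ∀ s ∈ C, ∀ s', P s (σ s) s' ≠ 0 → s' ∈ C)
    (r : S → ℝ)
    (hrank : ∀ s ∈ C, s ∉ REACH → ∃ s', P s (σ s) s' ≠ 0 ∧ r s > r s') :
    ∀ s ∈ C, mcReach (fun t => P t (σ t)) REACH s = 1 := by
  intro s hs
  set K : S → PMF S := fun t => P t (σ t)
  set f := mcReach K REACH
  obtain ⟨s₀, hs₀C, hs₀min⟩ := C.exists_min_image f C.toFinite ⟨s, hs⟩
  set M := C ∩ {t | IsMinOn f C t}
  have hdesc : ∀ t ∈ M, t ∉ REACH → ∃ t' ∈ M, r t' < r t := by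
    rintro t ⟨htC, htmin⟩ htR
    obtain ⟨t', hKt', hlt⟩ := hrank t htC htR
    exact ⟨t', ⟨hclosed t htC t' hKt',
      isMinOn_mcReach_of_apply_ne_zero K REACH htmin htR (hclosed t htC) hKt'⟩, hlt⟩
  obtain ⟨t, ⟨-, htmin⟩, htR⟩ := M.toFinite.inter_nonempty_of_forall_exists_lt
    ⟨s₀, hs₀C, isMinOn_iff.2 hs₀min⟩ r hdesc
  refine le_antisymm (mcReach_le_one K REACH s) ?_
  calc 1 = f t := (mcReach_of_mem K REACH htR).symm
    _ ≤ f s := isMinOn_iff.1 htmin s hs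

/-- In a finite MDP, a memoryless policy whose reached set `C`
avoids AVOID, is closed under successors, and admits a ranking function reaches
REACH with probability 1 from every state in `C`. -/
theorem ranking_implies_as_reach {S Act : Type} [Fintype S] [Fintype Act]
    (P : S → Act → PMF S) (REACH AVOID : Set S)
    (hdisj : Disjoint REACH AVOID)
    (hR : ∀ s ∈ REACH, ∀ α, P s α = PMF.pure s)
    (hA : ∀ s ∈ AVOID, ∀ α, P s α = PMF.pure s)
    (σ : S → Act) (C : Set S)
    (havoid : C ∩ AVOID = ∅)
    (hclosed : ∀ s ∈ C, ∀ s', P s (σ s) s' ≠ 0 → s' ∈ C)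
    (r : S → ℝ)
    (hrank : ∀ s ∈ C, s ∉ REACH → ∃ s', P s (σ s) s' ≠ 0 ∧ r s > r s') :
    ∀ s ∈ C, mcReach (fun t => P t (σ t)) REACH s = 1 :=
  ranking_implies_as_reach_general P REACH σ C hclosed r hrank
end
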